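/- arXiv:1304.7380 — 5 statements merged into one kernel-verified Lean document; each statement's English description precedes it below -/
import Mathlib

section
/- For a regular boundary problem (T, B), the semi-homogeneous problem Tu = 0, β(u) = B₀(β) for all β ∈ B has a unique solution u ∈ F for every boundary datum B₀ ∈ B' (the image of the trace map). -/
/-- The trace map `F → B*` sending `f` to the functional `β ↦ β(f)`. -/
noncomputable def trc {K F : Type*} [Field K] [AddCommGroup F] [Module K F]
    (B : Submodule K (Module.Dual K F)) : F →ₗ[K] Module.Dual K B :=
  (B.subtype.dualMap).comp (Module.Dual.eval K F)

/-! A complement `C` of `ker f` meets each fibre of `f` over `range f` in exactly one point.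
For `f = trc B`, whose kernel is `B^⊥`, regularity says that `ker T` is such a complement. -/

theorem LinearMap.existsUnique_mem_and_apply_eq_of_isCompl {R M M₂ : Type*} [Ring R]
    [AddCommGroup M] [AddCommGroup M₂] [Module R M] [Module R M₂] (f : M →ₗ[R] M₂)
    {C : Submodule R M} (h : IsCompl C (LinearMap.ker f)) {y : M₂} (hy : y ∈ LinearMap.range f) :
    ∃! u, u ∈ C ∧ f u = y := by
  set e := f.kerComplementEquivRange h
  refine ⟨e.symm ⟨y, hy⟩, ⟨(e.symm _).2, congrArg Subtype.val (e.apply_symm_apply _)⟩, ?_⟩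
  rintro u ⟨hu, rfl⟩
  have he : e ⟨u, hu⟩ = ⟨f u, hy⟩ := rfl
  rw [← he, e.symm_apply_apply]

section Trace

variable {K F : Type*} [Field K] [AddCommGroup F] [Module K F] (B : Submodule K (Module.Dual K F))

theorem ker_trc : LinearMap.ker (trc B) = B.dualCoannihilator := by
  ext f
  simp only [LinearMap.mem_ker, Submodule.mem_dualCoannihilator]
  constructor
  · exact fun h φ hφ => LinearMap.congr_fun h ⟨φ, hφ⟩
  · exact fun h => LinearMap.ext fun b => h b b.2

theorem trc_eq_iff {f : F} {β : Module.Dual K B} :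
    trc B f = β ↔ ∀ b : B, (b : Module.Dual K F) f = β b :=
  LinearMap.ext_iff

end Trace

theorem semi_homogeneous_unique_solution_general
    {K F G : Type*} [Field K]
    [AddCommGroup F] [Module K F] [AddCommGroup G] [Module K G]
    (T : F →ₗ[K] G)
    (B : Submodule K (Module.Dual K F))
    (hreg : IsCompl (LinearMap.ker T) B.dualCoannihilator) :
    ∀ B₀ ∈ LinearMap.range (trc B),
      ∃! u : F, T u = 0 ∧ ∀ b : B, (b : Module.Dual K F) u = B₀ b := by
  intro B₀ hB₀
  rw [← ker_trc] at hreg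
  simpa only [LinearMap.mem_ker, trc_eq_iff] using
    (trc B).existsUnique_mem_and_apply_eq_of_isCompl hreg hB₀

theorem semi_homogeneous_unique_solution
    {K F G : Type*} [Field K]
    [AddCommGroup F] [Module K F] [AddCommGroup G] [Module K G]
    (T : F →ₗ[K] G) (hT : Function.Surjective T)
    (B : Submodule K (Module.Dual K F))
    (hclosed : B.dualCoannihilator.dualAnnihilator = B)
    (hreg : IsCompl (LinearMap.ker T) B.dualCoannihilator) :
    ∀ B₀ ∈ LinearMap.range (trc B),
      ∃! u : F, T u = 0 ∧ ∀ b : B, (b : Module.Dual K F) u = B₀ b :=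
  semi_homogeneous_unique_solution_general T B hreg
end

section
/- Let (T, B) be a regular boundary problem with state operator H: B' → F (solving the semi-homogeneous problem), let J_T: 𝒢 → F be any right inverse of T, let J_B: B' → F be any interpolator for B (right inverse of the trace map trc: F → B'), and let P: F → F be the projector with Im P = ker T and ker P = B^⊥. Then the signal operator is G = (1 − P) ∘ J_T and the state operator is H = P ∘ J_B. -/
open LinearMap Module

theorem ker_trc_s9 {K F : Type*} [Field K] [AddCommGroup F] [Module K F]
    (B : Submodule K (Dual K F)) : ker (trc B) = B.dualCoannihilator := by
  ext f
  simp only [mem_ker, Submodule.mem_dualCoannihilator, DFunLike.ext_iff, Subtype.forall]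
  rfl

theorem IsIdempotentElem.sub_apply_mem_ker {R M : Type*} [Ring R] [AddCommGroup M] [Module R M]
    {p : M →ₗ[R] M} (hp : IsIdempotentElem p) (x : M) : x - p x ∈ ker p := by
  rw [mem_ker, map_sub, ← Module.End.mul_apply, hp.eq, sub_self]

theorem trc_apply_eq_of_ker_eq_dualCoannihilator {K F : Type*} [Field K] [AddCommGroup F]
    [Module K F] {B : Submodule K (Dual K F)} {p : F →ₗ[K] F} (hp : IsIdempotentElem p)
    (hker : ker p = B.dualCoannihilator) (x : F) : trc B (p x) = trc B x :=
  LinearMap.congr_fun ((hp.comp_eq_left_iff (trc B)).mpr (by rw [hker, ker_trc_s9])) x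

theorem signal_and_state_operator_via_projector_general
    {K F 𝒢 : Type*} [Field K]
    [AddCommGroup F] [Module K F] [AddCommGroup 𝒢] [Module K 𝒢]
    (T : F →ₗ[K] 𝒢)
    (B : Submodule K (Module.Dual K F))
    (P : F →ₗ[K] F) (hproj : P.comp P = P)
    (hPrange : LinearMap.range P = LinearMap.ker T)
    (hPker : LinearMap.ker P = B.dualCoannihilator)
    (JT : 𝒢 →ₗ[K] F) (hJT : T.comp JT = LinearMap.id)
    (JB : ↥(LinearMap.range (trc B)) →ₗ[K] F)
    (hJB : ∀ b : ↥(LinearMap.range (trc B)), trc B (JB b) = (b : Module.Dual K B)) :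
    (∀ f : 𝒢, T (JT f - P (JT f)) = f ∧ ∀ β ∈ B, β (JT f - P (JT f)) = 0) ∧
    (∀ b : ↥(LinearMap.range (trc B)),
      T (P (JB b)) = 0 ∧
      ∀ β : B, (β : Module.Dual K F) (P (JB b)) = (b : Module.Dual K B) β) := by
  have hidem : IsIdempotentElem P := hproj
  have hTP (x : F) : T (P x) = 0 := LinearMap.congr_fun (range_le_ker_iff.mp hPrange.le) x
  refine ⟨fun f ↦ ⟨?_, ?_⟩, fun b ↦ ⟨hTP _, fun β ↦ ?_⟩⟩
  · rw [map_sub, hTP, sub_zero]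
    exact LinearMap.congr_fun hJT f
  · exact (Submodule.mem_dualCoannihilator _).mp (hPker ▸ hidem.sub_apply_mem_ker (JT f))
  · have htrace := trc_apply_eq_of_ker_eq_dualCoannihilator hidem hPker (JB b)
    exact LinearMap.congr_fun (htrace ▸ hJB b) β

theorem signal_and_state_operator_via_projector
    {K F 𝒢 : Type*} [Field K]
    [AddCommGroup F] [Module K F] [AddCommGroup 𝒢] [Module K 𝒢]
    (T : F →ₗ[K] 𝒢) (hT : Function.Surjective T)
    (B : Submodule K (Module.Dual K F))
    (hclosed : B.dualCoannihilator.dualAnnihilator = B)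
    (hreg : IsCompl (LinearMap.ker T) B.dualCoannihilator)
    (P : F →ₗ[K] F) (hproj : P.comp P = P)
    (hPrange : LinearMap.range P = LinearMap.ker T)
    (hPker : LinearMap.ker P = B.dualCoannihilator)
    (JT : 𝒢 →ₗ[K] F) (hJT : T.comp JT = LinearMap.id)
    (JB : ↥(LinearMap.range (trc B)) →ₗ[K] F)
    (hJB : ∀ b : ↥(LinearMap.range (trc B)), trc B (JB b) = (b : Module.Dual K B)) :
    (∀ f : 𝒢, T (JT f - P (JT f)) = f ∧ ∀ β ∈ B, β (JT f - P (JT f)) = 0) ∧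
    (∀ b : ↥(LinearMap.range (trc B)),
      T (P (JB b)) = 0 ∧
      ∀ β : B, (β : Module.Dual K F) (P (JB b)) = (b : Module.Dual K B) β) :=
  signal_and_state_operator_via_projector_general T B P hproj hPrange hPker JT hJT JB hJB
end

section
/- Let (T, B) and (T̃, B̃) be boundary problems with T̃: F → 𝒢, T: 𝒢 → ℋ surjective linear maps, B ≤ 𝒢*, B̃ ≤ F*. Define the product (T, B)(T̃, B̃) = (T T̃, B·T̃ + B̃), where B·T̃ = {β ∘ T̃ | β ∈ B}. If both factors are regular (F = ker T̃ ⊕ B̃^⊥ and 𝒢 = ker T ⊕ B^⊥), then the product is regular: F = ker(T T̃) ⊕ (B·T̃ + B̃)^⊥. -/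
/-!
`(B·T̃ + B̃)^⊥ = T̃⁻¹(B^⊥) ∩ B̃^⊥` and `ker (T T̃) = T̃⁻¹(ker T)`, so the claim is that pulling the
splitting `𝒢 = ker T ⊕ B^⊥` back along `T̃` and intersecting with `B̃^⊥` splits `F`. Since
`F = ker T̃ ⊕ B̃^⊥` and `T̃` is onto, every element of `𝒢` lifts through `T̃` to `B̃^⊥`, which gives both halves.
-/

namespace Submodule

variable {R M N : Type*}

theorem dualCoannihilator_map_dualMap [CommSemiring R] [AddCommMonoid M] [Module R M]
    [AddCommMonoid N] [Module R N] (f : M →ₗ[R] N) (B : Submodule R (Module.Dual R N)) :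
    (B.map f.dualMap).dualCoannihilator = B.dualCoannihilator.comap f := by
  ext x
  simp [mem_dualCoannihilator]

variable [Ring R] [AddCommGroup M] [Module R M] [AddCommGroup N] [Module R N]

theorem exists_mem_apply_eq_of_codisjoint_ker {f : M →ₗ[R] N} (hf : Function.Surjective f)
    {Q' : Submodule R M} (hQ' : Codisjoint (LinearMap.ker f) Q') (y : N) :
    ∃ x ∈ Q', f x = y := by
  obtain ⟨z, rfl⟩ := hf y
  obtain ⟨k, hk, x, hx, rfl⟩ := mem_sup.mp (hQ'.eq_top ▸ mem_top : z ∈ LinearMap.ker f ⊔ Q')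
  exact ⟨x, hx, by rw [map_add, LinearMap.mem_ker.mp hk, zero_add]⟩

theorem isCompl_comap_comap_inf {f : M →ₗ[R] N} (hf : Function.Surjective f)
    {P Q : Submodule R N} {Q' : Submodule R M} (hPQ : IsCompl P Q)
    (hQ' : IsCompl (LinearMap.ker f) Q') :
    IsCompl (P.comap f) (Q.comap f ⊓ Q') := by
  constructor
  · rw [disjoint_iff, ← inf_assoc, ← comap_inf, hPQ.inf_eq_bot, comap_bot, hQ'.inf_eq_bot]
  · refine codisjoint_iff.mpr (eq_top_iff.mpr fun x _ => ?_)
    obtain ⟨p, hp, q, hq, hpq⟩ := mem_sup.mp (hPQ.sup_eq_top ▸ mem_top : f x ∈ P ⊔ Q)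
    obtain ⟨y, hy, rfl⟩ := exists_mem_apply_eq_of_codisjoint_ker hf hQ'.codisjoint q
    refine mem_sup.mpr ⟨x - y, ?_, y, ⟨hq, hy⟩, sub_add_cancel x y⟩
    rwa [mem_comap, map_sub, ← hpq, add_sub_cancel_right]

end Submodule

theorem product_boundary_problem_regular_general
    {K F 𝒢 ℋ : Type*} [Field K]
    [AddCommGroup F] [Module K F] [AddCommGroup 𝒢] [Module K 𝒢]
    [AddCommGroup ℋ] [Module K ℋ]
    (T' : F →ₗ[K] 𝒢) (hT' : Function.Surjective T')
    (T : 𝒢 →ₗ[K] ℋ)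
    (B : Submodule K (Module.Dual K 𝒢)) (B' : Submodule K (Module.Dual K F))
    (hreg : IsCompl (LinearMap.ker T) B.dualCoannihilator)
    (hreg' : IsCompl (LinearMap.ker T') B'.dualCoannihilator) :
    IsCompl (LinearMap.ker (T.comp T'))
      ((Submodule.map T'.dualMap B ⊔ B').dualCoannihilator) := by
  rw [Submodule.dualCoannihilator_sup_eq, Submodule.dualCoannihilator_map_dualMap,
    LinearMap.ker_comp]
  exact Submodule.isCompl_comap_comap_inf hT' hreg hreg'

theorem product_boundary_problem_regular
    {K F 𝒢 ℋ : Type*} [Field K]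
    [AddCommGroup F] [Module K F] [AddCommGroup 𝒢] [Module K 𝒢]
    [AddCommGroup ℋ] [Module K ℋ]
    (T' : F →ₗ[K] 𝒢) (hT' : Function.Surjective T')
    (T : 𝒢 →ₗ[K] ℋ) (hT : Function.Surjective T)
    (B : Submodule K (Module.Dual K 𝒢)) (B' : Submodule K (Module.Dual K F))
    (hreg : IsCompl (LinearMap.ker T) B.dualCoannihilator)
    (hreg' : IsCompl (LinearMap.ker T') B'.dualCoannihilator) :
    IsCompl (LinearMap.ker (T.comp T'))
      ((Submodule.map T'.dualMap B ⊔ B').dualCoannihilator) :=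
  product_boundary_problem_regular_general T' hT' T B B' hreg hreg'
end

section
/- With (T, B), (T̃, B̃) regular boundary problems as in the product construction, if G and G̃ are their respective signal operators, then G̃ ∘ G is the signal operator of the product (T T̃, B·T̃ + B̃): it satisfies (T T̃)(G̃ G) = id and Im(G̃ G) ⊆ (B·T̃ + B̃)^⊥. -/
theorem Submodule.dualCoannihilator_map_dualMap_s14 {R M N : Type*} [CommRing R]
    [AddCommGroup M] [Module R M] [AddCommGroup N] [Module R N]
    (f : M →ₗ[R] N) (Φ : Submodule R (Module.Dual R N)) :
    (Φ.map f.dualMap).dualCoannihilator = Φ.dualCoannihilator.comap f := by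
  ext x
  simp [Submodule.mem_dualCoannihilator]

theorem LinearMap.range_comp_le_comap_range {R M N P : Type*} [Semiring R]
    [AddCommMonoid M] [Module R M] [AddCommMonoid N] [Module R N]
    [AddCommMonoid P] [Module R P]
    {G : P →ₗ[R] M} {G' : M →ₗ[R] N} {T' : N →ₗ[R] M} (h : T'.comp G' = LinearMap.id) :
    LinearMap.range (G'.comp G) ≤ (LinearMap.range G).comap T' := by
  rw [← Submodule.map_le_iff_le_comap, ← LinearMap.range_comp, ← LinearMap.comp_assoc, h,
    LinearMap.id_comp]

theorem product_signal_operator_general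
    {K F 𝒢 ℋ : Type*} [Field K]
    [AddCommGroup F] [Module K F] [AddCommGroup 𝒢] [Module K 𝒢]
    [AddCommGroup ℋ] [Module K ℋ]
    (T' : F →ₗ[K] 𝒢)
    (T : 𝒢 →ₗ[K] ℋ)
    (B : Submodule K (Module.Dual K 𝒢)) (B' : Submodule K (Module.Dual K F))
    (G : ℋ →ₗ[K] 𝒢) (hG1 : T.comp G = LinearMap.id)
    (hG2 : LinearMap.range G = B.dualCoannihilator)
    (G' : 𝒢 →ₗ[K] F) (hG'1 : T'.comp G' = LinearMap.id)
    (hG'2 : LinearMap.range G' = B'.dualCoannihilator) :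
    (T.comp T').comp (G'.comp G) = LinearMap.id ∧
    LinearMap.range (G'.comp G) ≤
      (Submodule.map T'.dualMap B ⊔ B').dualCoannihilator := by
  constructor
  · rw [LinearMap.comp_assoc, ← LinearMap.comp_assoc G, hG'1, LinearMap.id_comp, hG1]
  · rw [Submodule.dualCoannihilator_sup_eq, Submodule.dualCoannihilator_map_dualMap_s14, ← hG2,
      ← hG'2]
    exact le_inf (LinearMap.range_comp_le_comap_range hG'1) (LinearMap.range_comp_le_range _ _)

theorem product_signal_operator
    {K F 𝒢 ℋ : Type*} [Field K]
    [AddCommGroup F] [Module K F] [AddCommGroup 𝒢] [Module K 𝒢]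
    [AddCommGroup ℋ] [Module K ℋ]
    (T' : F →ₗ[K] 𝒢) (hT' : Function.Surjective T')
    (T : 𝒢 →ₗ[K] ℋ) (hT : Function.Surjective T)
    (B : Submodule K (Module.Dual K 𝒢)) (B' : Submodule K (Module.Dual K F))
    (hreg : IsCompl (LinearMap.ker T) B.dualCoannihilator)
    (hreg' : IsCompl (LinearMap.ker T') B'.dualCoannihilator)
    (G : ℋ →ₗ[K] 𝒢) (hG1 : T.comp G = LinearMap.id)
    (hG2 : LinearMap.range G = B.dualCoannihilator)
    (G' : 𝒢 →ₗ[K] F) (hG'1 : T'.comp G' = LinearMap.id)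
    (hG'2 : LinearMap.range G' = B'.dualCoannihilator) :
    (T.comp T').comp (G'.comp G) = LinearMap.id ∧
    LinearMap.range (G'.comp G) ≤
      (Submodule.map T'.dualMap B ⊔ B').dualCoannihilator :=
  product_signal_operator_general T' T B B' G hG1 hG2 G' hG'1 hG'2
end

section
/- In the product of two regular boundary problems (T, B)(T̃, B̃) = (T T̃, B·T̃ + B̃), the sum B·T̃ + B̃ of subspaces of F* is direct, i.e., (B·T̃) ∩ B̃ = 0. -/
/-! A functional `β ∘ T'` vanishes on `ker T'`; if it also lies in `B'`, it vanishes on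
`B'.dualCoannihilator`. Regularity of `(T', B')` says these two subspaces span `F`, so the
functional is zero. -/

open Submodule

theorem LinearMap.disjoint_range_dualMap_of_codisjoint_ker
    {R M N : Type*} [CommSemiring R] [AddCommMonoid M] [Module R M]
    [AddCommMonoid N] [Module R N] (f : M →ₗ[R] N) {W : Submodule R (Module.Dual R M)}
    (h : Codisjoint (LinearMap.ker f) W.dualCoannihilator) :
    Disjoint (LinearMap.range f.dualMap) W := by
  rw [disjoint_iff, eq_bot_iff]
  calc LinearMap.range f.dualMap ⊓ W
      ≤ (LinearMap.ker f).dualAnnihilator ⊓ W.dualCoannihilator.dualAnnihilator :=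
        inf_le_inf f.range_dualMap_le_dualAnnihilator_ker W.le_dualCoannihilator_dualAnnihilator
    _ = (LinearMap.ker f ⊔ W.dualCoannihilator).dualAnnihilator := (dualAnnihilator_sup_eq _ _).symm
    _ = ⊥ := by rw [h.eq_top, dualAnnihilator_top]

theorem product_boundary_space_sum_direct_general
    {K F 𝒢 : Type*} [Field K]
    [AddCommGroup F] [Module K F] [AddCommGroup 𝒢] [Module K 𝒢]
    (T' : F →ₗ[K] 𝒢)
    (B : Submodule K (Module.Dual K 𝒢)) (B' : Submodule K (Module.Dual K F))
    (hreg' : IsCompl (LinearMap.ker T') B'.dualCoannihilator) :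
    Submodule.map T'.dualMap B ⊓ B' = ⊥ :=
  ((T'.disjoint_range_dualMap_of_codisjoint_ker hreg'.codisjoint).mono_left
    (LinearMap.map_le_range (f := T'.dualMap))).eq_bot

theorem product_boundary_space_sum_direct
    {K F 𝒢 ℋ : Type*} [Field K]
    [AddCommGroup F] [Module K F] [AddCommGroup 𝒢] [Module K 𝒢]
    [AddCommGroup ℋ] [Module K ℋ]
    (T' : F →ₗ[K] 𝒢) (hT' : Function.Surjective T')
    (T : 𝒢 →ₗ[K] ℋ) (hT : Function.Surjective T)
    (B : Submodule K (Module.Dual K 𝒢)) (B' : Submodule K (Module.Dual K F))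
    (hreg : IsCompl (LinearMap.ker T) B.dualCoannihilator)
    (hreg' : IsCompl (LinearMap.ker T') B'.dualCoannihilator) :
    Submodule.map T'.dualMap B ⊓ B' = ⊥ :=
  product_boundary_space_sum_direct_general T' B B' hreg'
end
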